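/- arXiv:1308.3758 — 4 statements merged into one kernel-verified Lean document; each statement's English description precedes it below -/
import Mathlib

section
/- Let K = (k₁,...,k_d) be a row vector such that all eigenvalues of the companion-type matrix J_d + e_d·K have nonzero real parts of the same sign. Let c₀ be the minimum of |Re(λ)| over the eigenvalues λ. Then, with the convention k_{d+1} := 1, for every m = 0,...,d-1, one has |k_{d-m}| ≥ c₀·|k_{d-m+1}|·(d-m)/(m+1). -/
/-!
The characteristic polynomial of `J_d + e_d K` is `χ = X ^ d - ∑ k_{j+1} X ^ j`, because the
transpose of this matrix is the matrix of multiplication by `X` on `ℝ[X] ⧸ (χ)` in the basis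
`1, X, …, X ^ (d - 1)`. After replacing `χ(X)` by `± χ(-X)` if necessary, every complex root `z`
of `χ` satisfies `Re z ≤ -c₀`, so `χ` is a product of real factors `X - r` with `r ≤ -c₀` and
`X ^ 2 - 2 Re z X + |z| ^ 2`. For each such factor `p` of degree `n`, both `p` and
`n p - (X + c₀) p'` have nonnegative coefficients, and the product rule carries both properties
over to products. The `j`-th coefficient of `d χ - (X + c₀) χ'` is
`(d - j) a_j - c₀ (j + 1) a_{j+1}`, which gives the bound.
-/

open Polynomial Matrix

namespace Polynomial

variable {c : ℝ} {m n : ℕ} {p q : ℝ[X]}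

def NonnegCoeffs (p : ℝ[X]) : Prop := ∀ j, 0 ≤ p.coeff j

theorem NonnegCoeffs.add (hp : NonnegCoeffs p) (hq : NonnegCoeffs q) : NonnegCoeffs (p + q) :=
  fun j => by rw [coeff_add]; exact add_nonneg (hp j) (hq j)

theorem NonnegCoeffs.mul (hp : NonnegCoeffs p) (hq : NonnegCoeffs q) : NonnegCoeffs (p * q) :=
  fun j => by
    rw [coeff_mul]
    exact Finset.sum_nonneg fun x _ => mul_nonneg (hp _) (hq _)

theorem nonnegCoeffs_C {a : ℝ} (ha : 0 ≤ a) : NonnegCoeffs (C a) :=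
  fun j => by rw [coeff_C]; split_ifs <;> simp [ha]

theorem nonnegCoeffs_X : NonnegCoeffs X :=
  fun j => by rw [coeff_X]; split_ifs <;> simp

noncomputable def eulerDefect (c : ℝ) (n : ℕ) (p : ℝ[X]) : ℝ[X] :=
  C (n : ℝ) * p - (X + C c) * derivative p

theorem coeff_eulerDefect (c : ℝ) (n : ℕ) (p : ℝ[X]) (j : ℕ) :
    (eulerDefect c n p).coeff j = (n - j) * p.coeff j - c * (j + 1) * p.coeff (j + 1) := by
  have hX : (X * derivative p).coeff j = j * p.coeff j := by
    cases j with
    | zero => simp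
    | succ k => rw [coeff_X_mul, coeff_derivative]; push_cast; ring
  rw [eulerDefect, coeff_sub, add_mul, coeff_add, hX, coeff_C_mul, coeff_C_mul, coeff_derivative]
  ring

theorem eulerDefect_mul (c : ℝ) (m n : ℕ) (p q : ℝ[X]) :
    eulerDefect c (m + n) (p * q) = eulerDefect c m p * q + p * eulerDefect c n q := by
  simp only [eulerDefect, derivative_mul, Nat.cast_add, map_add]
  ring

def CoeffRatioBounded (c : ℝ) (n : ℕ) (p : ℝ[X]) : Prop :=
  NonnegCoeffs p ∧ NonnegCoeffs (eulerDefect c n p)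

theorem CoeffRatioBounded.mul (hp : CoeffRatioBounded c m p) (hq : CoeffRatioBounded c n q) :
    CoeffRatioBounded c (m + n) (p * q) :=
  ⟨hp.1.mul hq.1, by rw [eulerDefect_mul]; exact (hp.2.mul hq.1).add (hp.1.mul hq.2)⟩

theorem CoeffRatioBounded.coeff_succ_le (hp : CoeffRatioBounded c n p) (j : ℕ) :
    c * (j + 1) * p.coeff (j + 1) ≤ (n - j) * p.coeff j := by
  have := hp.2 j
  rw [coeff_eulerDefect] at this
  linarith

theorem coeffRatioBounded_one (c : ℝ) : CoeffRatioBounded c 0 1 :=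
  ⟨nonnegCoeffs_C zero_le_one, fun j => by simp [eulerDefect]⟩

theorem coeffRatioBounded_X_sub_C (hc : 0 ≤ c) {r : ℝ} (hr : r ≤ -c) :
    CoeffRatioBounded c 1 (X - C r) := by
  refine ⟨?_, ?_⟩
  · rw [sub_eq_add_neg, ← map_neg]
    exact nonnegCoeffs_X.add (nonnegCoeffs_C (by linarith))
  · have : eulerDefect c 1 (X - C r) = C (-r - c) := by
      rw [eulerDefect, derivative_sub, derivative_X, derivative_C, sub_zero, Nat.cast_one]
      simp only [map_one, map_sub, map_neg, one_mul, mul_one]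
      ring
    rw [this]
    exact nonnegCoeffs_C (by linarith)

theorem coeffRatioBounded_quadratic (hc : 0 ≤ c) {z : ℂ} (hz : z.re ≤ -c) :
    CoeffRatioBounded c 2 (X ^ 2 - C (2 * z.re) * X + C (‖z‖ ^ 2)) := by
  have hnorm : c * -z.re ≤ ‖z‖ ^ 2 := by
    rw [← Complex.normSq_eq_norm_sq, Complex.normSq_apply]
    nlinarith [mul_self_nonneg z.im]
  refine ⟨?_, ?_⟩
  · rw [sub_eq_add_neg, ← neg_mul, ← map_neg, pow_two]
    exact ((nonnegCoeffs_X.mul nonnegCoeffs_X).add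
      ((nonnegCoeffs_C (by linarith)).mul nonnegCoeffs_X)).add (nonnegCoeffs_C (by positivity))
  · have : eulerDefect c 2 (X ^ 2 - C (2 * z.re) * X + C (‖z‖ ^ 2)) =
        C (-2 * z.re - 2 * c) * X + C (2 * ‖z‖ ^ 2 + 2 * c * z.re) := by
      rw [eulerDefect, derivative_add, derivative_sub, derivative_X_sq, derivative_C_mul_X,
        derivative_C]
      simp only [map_add, map_sub, map_mul, map_neg, Nat.cast_ofNat, map_ofNat]
      ring
    rw [this]
    exact ((nonnegCoeffs_C (by linarith)).mul nonnegCoeffs_X).add (nonnegCoeffs_C (by linarith))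

theorem coeffRatioBounded_of_forall_aeval_eq_zero (hc : 0 ≤ c) (hp : IsMonicOfDegree p n)
    (hroots : ∀ z : ℂ, aeval z p = 0 → z.re ≤ -c) : CoeffRatioBounded c n p := by
  induction n using Nat.strong_induction_on generalizing p with
  | _ n ih =>
  rcases n.eq_zero_or_pos with rfl | hn
  · rw [isMonicOfDegree_zero_iff.1 hp]
    exact coeffRatioBounded_one c
  have of_factor : ∀ {q g : ℝ[X]} {k : ℕ}, IsMonicOfDegree q k → 0 < k → p = q * g →
      CoeffRatioBounded c k q → CoeffRatioBounded c n p := by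
    intro q g k hq hk hpg hcq
    have hg0 : g ≠ 0 := right_ne_zero_of_mul (hpg ▸ hp.ne_zero)
    have hdeg : n = k + g.natDegree := by
      rw [← hp.natDegree_eq, hpg, natDegree_mul hq.ne_zero hg0, hq.natDegree_eq]
    have hg : IsMonicOfDegree g g.natDegree := hq.of_mul_left (hdeg ▸ hpg ▸ hp)
    have hcg := ih _ (by omega) hg fun w hw => hroots w (by rw [hpg, map_mul, hw, mul_zero])
    rw [hdeg, hpg]
    exact hcq.mul hcg
  obtain ⟨z, hz⟩ : ∃ z : ℂ, aeval z p = 0 :=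
    IsAlgClosed.exists_aeval_eq_zero ℂ p <| by
      rw [degree_eq_natDegree hp.ne_zero, hp.natDegree_eq]
      exact_mod_cast hn.ne'
  by_cases him : z.im = 0
  · have hroot : p.IsRoot z.re := by
      have : z = algebraMap ℝ ℂ z.re := Complex.ext rfl (by simp [him])
      rwa [this, aeval_algebraMap_apply, map_eq_zero_iff _ (algebraMap ℝ ℂ).injective] at hz
    exact of_factor (isMonicOfDegree_X_sub_one z.re) one_pos
      (mul_divByMonic_eq_iff_isRoot.2 hroot).symm (coeffRatioBounded_X_sub_C hc (hroots z hz))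
  · obtain ⟨g, hg⟩ := quadratic_dvd_of_aeval_eq_zero_im_ne_zero p hz him
    exact of_factor (isMonicOfDegree_sub_add_two _ _) two_pos hg
      (coeffRatioBounded_quadratic hc (hroots z hz))

theorem coeff_neg_one_pow_mul_comp_neg_X {R : Type*} [CommRing R] (n : ℕ) (p : R[X]) (j : ℕ) :
    (C ((-1) ^ n) * p.comp (-X)).coeff j = (-1) ^ n * (p.coeff j * (-1) ^ j) := by
  rw [coeff_C_mul, ← comp_C_mul_X_coeff, map_neg, map_one, neg_one_mul]

theorem IsMonicOfDegree.neg_one_pow_mul_comp_neg_X {R : Type*} [CommRing R] [Nontrivial R]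
    {p : R[X]} (hp : IsMonicOfDegree p n) :
    IsMonicOfDegree (C ((-1) ^ n) * p.comp (-X)) n := by
  refine (isMonicOfDegree_iff _ _).2 ⟨natDegree_le_iff_coeff_eq_zero.2 fun j hj => ?_, ?_⟩
  · rw [coeff_neg_one_pow_mul_comp_neg_X,
      coeff_eq_zero_of_natDegree_lt (hp.natDegree_eq ▸ (by exact_mod_cast hj)), zero_mul,
      mul_zero]
  · rw [coeff_neg_one_pow_mul_comp_neg_X, ← hp.natDegree_eq, hp.monic.coeff_natDegree,
      one_mul, ← pow_add, Even.neg_one_pow ⟨_, rfl⟩]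

theorem abs_coeff_succ_le (hc : 0 ≤ c) (hp : IsMonicOfDegree p n)
    (hroots : (∀ z : ℂ, aeval z p = 0 → c ≤ z.re) ∨ (∀ z : ℂ, aeval z p = 0 → z.re ≤ -c))
    (j : ℕ) : c * (j + 1) * |p.coeff (j + 1)| ≤ (n - j) * |p.coeff j| := by
  obtain ⟨q, hq, habs⟩ : ∃ q, CoeffRatioBounded c n q ∧ ∀ i, |q.coeff i| = |p.coeff i| := by
    rcases hroots with hright | hleft
    · refine ⟨_, coeffRatioBounded_of_forall_aeval_eq_zero hc hp.neg_one_pow_mul_comp_neg_X ?_,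
        fun i => by rw [coeff_neg_one_pow_mul_comp_neg_X]; simp [abs_mul]⟩
      intro z hz
      have : aeval (-z) p = 0 := by simpa [aeval_comp] using hz
      linarith [hright (-z) this, Complex.neg_re z]
    · exact ⟨p, coeffRatioBounded_of_forall_aeval_eq_zero hc hp hleft, fun _ => rfl⟩
  rw [← habs, ← habs, abs_of_nonneg (hq.1 _), abs_of_nonneg (hq.1 _)]
  exact hq.coeff_succ_le j

end Polynomial

namespace Matrix

variable {F : Type*} [Field F] {n : ℕ}

/-- The matrix `J_n + e_n k` of the paper. -/
def companion (k : Fin n → F) : Matrix (Fin n) (Fin n) F :=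
  of fun i j => (if (j : ℕ) = (i : ℕ) + 1 then 1 else 0) + (if (i : ℕ) = n - 1 then k j else 0)

theorem charpoly_companion (k : Fin n → F) :
    (companion k).charpoly = X ^ n - ∑ j : Fin n, C (k j) * X ^ (j : ℕ) := by
  set f := X ^ n - ∑ j : Fin n, C (k j) * X ^ (j : ℕ)
  have hf : IsMonicOfDegree f n := by
    have hlt : degree (∑ j : Fin n, C (k j) * X ^ (j : ℕ)) < degree ((X : F[X]) ^ n) := by
      rw [degree_X_pow]; exact degree_sum_fin_lt k
    exact ⟨natDegree_eq_of_degree_eq_some ((degree_sub_eq_left_of_degree_lt hlt).trans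
      (degree_X_pow n)), (monic_X_pow n).sub_of_left hlt⟩
  let b := (AdjoinRoot.powerBasis hf.ne_zero).basis.reindex (finCongr hf.natDegree_eq)
  have hb : ∀ i, b i = AdjoinRoot.root f ^ (i : ℕ) := fun i => by simp [b]; rfl
  have hroot : AdjoinRoot.root f ^ n = ∑ i : Fin n, k i • AdjoinRoot.root f ^ (i : ℕ) := by
    have h := AdjoinRoot.aeval_eq (f := f) f
    rw [AdjoinRoot.mk_self] at h
    simpa [f, sub_eq_zero, Algebra.smul_def] using h
  have hmul : ∀ j : Fin n, AdjoinRoot.root f * b j = ∑ i, companion k j i • b i := by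
    intro j
    simp only [companion, of_apply, hb, add_smul, ite_smul, one_smul, zero_smul,
      Finset.sum_add_distrib]
    by_cases hj : (j : ℕ) = n - 1
    · rw [Finset.sum_eq_zero fun i _ => if_neg (by have := i.isLt; omega), zero_add,
        Finset.sum_congr rfl fun i _ => if_pos hj, ← hroot, ← pow_succ', hj,
        Nat.sub_add_cancel j.pos]
    · rw [Finset.sum_eq_zero fun i _ => if_neg hj, add_zero,
        Fintype.sum_eq_single ⟨j + 1, by omega⟩ fun i hi => if_neg fun h => hi (Fin.ext h),
        if_pos rfl, pow_succ']
  have hM : companion k = (Algebra.leftMulMatrix b (AdjoinRoot.root f))ᵀ := by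
    ext j i
    rw [transpose_apply, Algebra.leftMulMatrix_eq_repr_mul, hmul, b.repr_sum_self]
  have := hf.monic.finite_adjoinRoot
  have := hf.monic.free_adjoinRoot
  rw [hM, charpoly_transpose, Algebra.leftMulMatrix_apply, LinearMap.charpoly_toMatrix,
    ← LinearMap.charpoly_toMatrix _ (AdjoinRoot.powerBasis hf.ne_zero).basis,
    ← Algebra.leftMulMatrix_apply, ← AdjoinRoot.powerBasis_gen hf.ne_zero,
    charpoly_leftMulMatrix, AdjoinRoot.minpoly_powerBasis_gen_of_monic hf.monic]

theorem coeff_charpoly_companion (k : Fin n → F) (j : Fin n) :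
    (companion k).charpoly.coeff j = -k j := by
  rw [charpoly_companion]
  simp [coeff_X_pow, j.isLt.ne, Fin.val_inj]

theorem mem_roots_charpoly_map_ofReal_iff {ι : Type*} [Fintype ι] [DecidableEq ι]
    (M : Matrix ι ι ℝ) (z : ℂ) :
    z ∈ (M.map Complex.ofReal).charpoly.roots ↔ aeval z M.charpoly = 0 := by
  rw [show M.map Complex.ofReal = M.map (algebraMap ℝ ℂ) from rfl, charpoly_map]
  exact mem_aroots.trans (and_iff_right M.charpoly_monic.ne_zero)

end Matrix

theorem companion_coeff_bounds_general {d : ℕ} (K : ℕ → ℝ) (hK : K (d + 1) = 1)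
    (M : Matrix (Fin d) (Fin d) ℝ)
    (hM : M = Matrix.of fun i j : Fin d =>
      (if (j : ℕ) = (i : ℕ) + 1 then (1 : ℝ) else 0) +
      (if (i : ℕ) = d - 1 then K ((j : ℕ) + 1) else 0))
    (c₀ : ℝ)
    (hroots : (∀ z ∈ ((M.map (Complex.ofReal)).charpoly).roots, 0 < z.re) ∨
              (∀ z ∈ ((M.map (Complex.ofReal)).charpoly).roots, z.re < 0))
    (hc₀ : ∀ z ∈ ((M.map (Complex.ofReal)).charpoly).roots, c₀ ≤ |z.re|) :
    ∀ m : ℕ, m < d →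
      c₀ * |K (d - m + 1)| * (d - m) / (m + 1) ≤ |K (d - m)| := by
  intro m hm
  have hdm : (0 : ℝ) ≤ d - m := by rw [sub_nonneg]; exact_mod_cast hm.le
  rcases le_or_gt c₀ 0 with hc | hc
  · exact (div_nonpos_of_nonpos_of_nonneg (mul_nonpos_of_nonpos_of_nonneg
      (mul_nonpos_of_nonpos_of_nonneg hc (abs_nonneg _)) hdm) (by positivity)).trans (abs_nonneg _)
  replace hM : M = companion fun j : Fin d => K (j + 1) := hM
  have hdeg : IsMonicOfDegree M.charpoly d :=
    ⟨M.charpoly_natDegree_eq_dim.trans (Fintype.card_fin d), M.charpoly_monic⟩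
  have hcoeff : ∀ i ≤ d, |M.charpoly.coeff i| = |K (i + 1)| := by
    intro i hi
    rcases hi.lt_or_eq with hi | rfl
    · rw [hM, ← Fin.val_mk hi, coeff_charpoly_companion, abs_neg]
    · rw [((isMonicOfDegree_iff _ _).1 hdeg).2, hK]
  have hhalf : (∀ z : ℂ, aeval z M.charpoly = 0 → c₀ ≤ z.re) ∨
      (∀ z : ℂ, aeval z M.charpoly = 0 → z.re ≤ -c₀) := by
    refine hroots.imp (fun hpos z hz => ?_) (fun hneg z hz => ?_) <;>
      rw [← M.mem_roots_charpoly_map_ofReal_iff] at hz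
    · simpa [abs_of_pos (hpos z hz)] using hc₀ z hz
    · linarith [abs_of_neg (hneg z hz), hc₀ z hz]
  obtain ⟨j, rfl⟩ : ∃ j, d = j + m + 1 := ⟨d - m - 1, by omega⟩
  have key := abs_coeff_succ_le hc.le hdeg hhalf j
  rw [hcoeff _ (by omega), hcoeff _ (by omega)] at key
  rw [show j + m + 1 - m = j + 1 by omega, div_le_iff₀ (by positivity)]
  push_cast at key ⊢
  linarith

/-- Let `K = (k₁,…,k_d)` be the last row of the companion-type matrix `J_d + e_d K`
(ones on the superdiagonal, `K` added as last row).  If all eigenvalues have nonzero real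
parts of the same sign and `c₀` bounds `|Re λ|` from below (in particular for `c₀` the
minimum of `|Re λ|`), then with the convention `k_{d+1} := 1`, for every `m = 0,…,d-1` one
has `|k_{d-m}| ≥ c₀ |k_{d-m+1}| (d-m)/(m+1)`. -/
theorem companion_coeff_bounds {d : ℕ} (hd : 0 < d) (K : ℕ → ℝ) (hK : K (d + 1) = 1)
    (M : Matrix (Fin d) (Fin d) ℝ)
    (hM : M = Matrix.of fun i j : Fin d =>
      (if (j : ℕ) = (i : ℕ) + 1 then (1 : ℝ) else 0) +
      (if (i : ℕ) = d - 1 then K ((j : ℕ) + 1) else 0))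
    (c₀ : ℝ)
    (hroots : (∀ z ∈ ((M.map (Complex.ofReal)).charpoly).roots, 0 < z.re) ∨
              (∀ z ∈ ((M.map (Complex.ofReal)).charpoly).roots, z.re < 0))
    (hc₀ : ∀ z ∈ ((M.map (Complex.ofReal)).charpoly).roots, c₀ ≤ |z.re|) :
    ∀ m : ℕ, m < d →
      c₀ * |K (d - m + 1)| * (d - m) / (m + 1) ≤ |K (d - m)| :=
  companion_coeff_bounds_general K hK M hM c₀ hroots hc₀
end

section
/- The set of periodic (T,μ)-signals is dense in 𝒢(T,μ) for the weak-* topology of L^∞(ℝ,ℝ) (as dual of L¹): for every α ∈ 𝒢(T,μ), every y ∈ L¹(ℝ,ℝ) and every ε > 0, there exists a periodic signal β ∈ 𝒢(T,μ) with |∫ y(β - α)| < ε. -/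
/-!
Cut `α` off outside a window `[-k, k]` carrying all but `ε` of the mass of `|y|`, pad it with `1`
over a length `T` on each side and repeat with period `2(k + T)`. The resulting signal agrees with
`α` on `[-k, k]`, so `∫ y (β - α)` only sees the tail of `y`. Up to a shift by a multiple of the
period, every window of length `T` lies either in `[-(k + T), k + T]`, where the signal dominates
`α`, or in the padding `(k, k + 2T)`, where it equals `1`; either way it carries mass at least `μ`.
-/

open MeasureTheory Set Filter Topology

theorem MeasureTheory.Integrable.tendsto_setIntegral_norm_compl_Icc {E : Type*}
    [NormedAddCommGroup E] {f : ℝ → E} (hf : Integrable f) :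
    Tendsto (fun k => ∫ t in (Icc (-k) k)ᶜ, ‖f t‖) atTop (𝓝 0) := by
  have hcover : ⋂ k : ℝ, (Icc (-k) k)ᶜ = ∅ :=
    eq_empty_of_forall_notMem fun x hx =>
      mem_iInter.1 hx |x| ⟨neg_abs_le x, le_abs_self x⟩
  have h := tendsto_setIntegral_of_antitone (fun k => measurableSet_Icc.compl)
    (fun a b hab => compl_subset_compl.2 (Icc_subset_Icc (neg_le_neg hab) hab))
    ⟨0, hf.norm.integrableOn⟩ (μ := volume)
  rwa [hcover, Measure.restrict_empty, integral_zero_measure] at h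

theorem abs_integral_mul_le_setIntegral_compl {X : Type*} [MeasurableSpace X] {ν : Measure X}
    {y g : X → ℝ} {s : Set X} (hy : Integrable y ν) (hg : ∀ x, |g x| ≤ 1)
    (hgs : ∀ x ∈ s, g x = 0) :
    |∫ x, y x * g x ∂ν| ≤ ∫ x in sᶜ, ‖y x‖ ∂ν := by
  rw [← setIntegral_eq_integral_of_forall_compl_eq_zero (s := sᶜ) (f := fun x => y x * g x)
    fun x hx => by rw [hgs x (not_not.1 hx), mul_zero], ← Real.norm_eq_abs]
  refine norm_integral_le_of_norm_le hy.norm.integrableOn (ae_of_all _ fun x => ?_)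
  rw [norm_mul]
  exact mul_le_of_le_one_right (norm_nonneg _) (hg x)

theorem intervalIntegrable_of_mem_Icc {f : ℝ → ℝ} {c d : ℝ} (hf : Measurable f)
    (h : ∀ x, f x ∈ Icc c d) (a b : ℝ) : IntervalIntegrable f volume a b :=
  intervalIntegrable_const.mono_fun' hf.aestronglyMeasurable
    (ae_of_all _ fun x => abs_le_max_abs_abs (h x).1 (h x).2)

theorem Function.Periodic.intervalIntegral_toIcoMod {f : ℝ → ℝ} {p : ℝ}
    (hf : Function.Periodic f p) (hp : 0 < p) (a t T : ℝ) :
    ∫ s in t..t + T, f s = ∫ s in toIcoMod hp a t..toIcoMod hp a t + T, f s := by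
  set n := toIcoDiv hp a t
  have ht : toIcoMod hp a t + n • p = t := toIcoMod_add_toIcoDiv_zsmul hp a t
  have hshift : ∀ s, f (s + n • p) = f s := hf.zsmul n
  calc ∫ s in t..t + T, f s
      = ∫ s in toIcoMod hp a t..toIcoMod hp a t + T, f (s + n • p) := by
        rw [intervalIntegral.integral_comp_add_right, add_right_comm, ht]
    _ = _ := by simp only [hshift]

noncomputable def periodicExtension {β : Type*} (g : ℝ → β) {p : ℝ} (hp : 0 < p) (a : ℝ) :
    ℝ → β :=
  fun t => g (toIcoMod hp a t)

section periodicExtension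

variable {β : Type*} {g : ℝ → β} {p : ℝ} (hp : 0 < p) (a : ℝ)

theorem periodicExtension_periodic : Function.Periodic (periodicExtension g hp a) p :=
  fun t => congrArg g (toIcoMod_add_right hp a t)

theorem periodicExtension_of_mem_Ico {t : ℝ} (ht : t ∈ Ico a (a + p)) :
    periodicExtension g hp a t = g t :=
  congrArg g ((toIcoMod_eq_self hp).2 ht)

theorem Measurable.periodicExtension [MeasurableSpace β] (hg : Measurable g) :
    Measurable (periodicExtension g hp a) := by
  have h : Measurable (toIcoMod hp a) := by
    simp_rw [funext (toIcoMod_eq_add_fract_mul hp a)]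
    fun_prop
  exact hg.comp h

end periodicExtension

noncomputable def periodicPadding (α : ℝ → ℝ) (k T : ℝ) (hp : 0 < 2 * (k + T)) : ℝ → ℝ :=
  periodicExtension ((Icc (-k) k).piecewise α 1) hp (-(k + T))

section periodicPadding

variable {α : ℝ → ℝ} {k T : ℝ} (hp : 0 < 2 * (k + T))

theorem periodicPadding_periodic : Function.Periodic (periodicPadding α k T hp) (2 * (k + T)) :=
  periodicExtension_periodic hp _

theorem Measurable.periodicPadding (hα : Measurable α) : Measurable (periodicPadding α k T hp) :=
  (hα.piecewise measurableSet_Icc measurable_const).periodicExtension hp _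

theorem periodicPadding_mem_Icc (hα : ∀ t, α t ∈ Icc (0 : ℝ) 1) (t : ℝ) :
    periodicPadding α k T hp t ∈ Icc (0 : ℝ) 1 := by
  unfold periodicPadding periodicExtension piecewise
  split_ifs
  exacts [hα _, ⟨zero_le_one, le_rfl⟩]

theorem periodicPadding_of_mem_Ico {t : ℝ} (ht : t ∈ Ico (-(k + T)) (k + T)) :
    periodicPadding α k T hp t = (Icc (-k) k).piecewise α 1 t :=
  periodicExtension_of_mem_Ico hp _ (by rwa [two_mul, neg_add_cancel_left])

theorem periodicPadding_of_mem_Icc (hT : 0 < T) {t : ℝ} (ht : t ∈ Icc (-k) k) :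
    periodicPadding α k T hp t = α t := by
  rw [periodicPadding_of_mem_Ico hp ⟨by linarith [ht.1], by linarith [ht.2]⟩,
    piecewise_eq_of_mem _ _ _ ht]

theorem le_periodicPadding (hα : ∀ t, α t ≤ 1) {t : ℝ} (ht : t ∈ Ico (-(k + T)) (k + T)) :
    α t ≤ periodicPadding α k T hp t := by
  rw [periodicPadding_of_mem_Ico hp ht]
  by_cases htk : t ∈ Icc (-k) k
  · rw [piecewise_eq_of_mem _ _ _ htk]
  · rw [piecewise_eq_of_notMem _ _ _ htk]
    exact hα t

theorem periodicPadding_eq_one (hk : 0 ≤ k) {t : ℝ} (ht : t ∈ Ioo k (k + 2 * T)) :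
    periodicPadding α k T hp t = 1 := by
  have hIco : ∀ s ∈ Ico (-(k + T)) (k + T), s ∉ Icc (-k) k →
      periodicPadding α k T hp s = 1 := fun s hs hsk => by
    rw [periodicPadding_of_mem_Ico hp hs, piecewise_eq_of_notMem _ _ _ hsk, Pi.one_apply]
  obtain ⟨hkt, htT⟩ := ht
  rcases lt_or_ge t (k + T) with hlt | hge
  · exact hIco t ⟨by linarith, hlt⟩ fun h => by linarith [h.2]
  · rw [← (periodicPadding_periodic hp).sub_eq]
    exact hIco _ ⟨by linarith, by linarith⟩ fun h => by linarith [h.1]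

theorem le_intervalIntegral_periodicPadding {μ : ℝ} (hT : 0 ≤ T) (hk : 0 ≤ k) (hμT : μ ≤ T)
    (hαm : Measurable α) (hα : ∀ t, α t ∈ Icc (0 : ℝ) 1)
    (hαPE : ∀ t, μ ≤ ∫ s in t..t + T, α s) (t : ℝ) :
    μ ≤ ∫ s in t..t + T, periodicPadding α k T hp s := by
  have hβi :=
    intervalIntegrable_of_mem_Icc (hαm.periodicPadding hp) (periodicPadding_mem_Icc hp hα)
  rw [(periodicPadding_periodic hp).intervalIntegral_toIcoMod hp (-(k + T))]
  obtain ⟨ht'₁, ht'₂⟩ : toIcoMod hp (-(k + T)) t ∈ Ico (-(k + T)) (k + T) := by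
    simpa only [two_mul, neg_add_cancel_left] using toIcoMod_mem_Ico hp (-(k + T)) t
  set t' := toIcoMod hp (-(k + T)) t
  rcases le_or_gt t' k with hwin | hwin
  · refine (hαPE t').trans (intervalIntegral.integral_mono_on_of_le_Ioo (by linarith)
      (intervalIntegrable_of_mem_Icc hαm hα _ _) (hβi _ _) fun s hs => ?_)
    exact le_periodicPadding hp (fun s => (hα s).2) ⟨by linarith [hs.1], by linarith [hs.2]⟩
  · calc μ ≤ ∫ _ in t'..t' + T, (1 : ℝ) := by simpa using hμT
      _ ≤ _ := intervalIntegral.integral_mono_on_of_le_Ioo (by linarith)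
          intervalIntegrable_const (hβi _ _) fun s hs =>
            (periodicPadding_eq_one hp hk ⟨by linarith [hs.1], by linarith [hs.2]⟩).ge

end periodicPadding

/-- The periodic `(T,μ)`-signals are weak-* dense in the class `𝒢(T,μ)` of persistently
exciting signals: for every `(T,μ)`-signal `α`, every `y ∈ L¹(ℝ)` and every `ε > 0` there
is a periodic `(T,μ)`-signal `β` with `|∫ y (β - α)| < ε`. -/
theorem periodic_PE_signals_weakStar_dense (T μ : ℝ) (hμ : 0 < μ) (hμT : μ ≤ T)
    (α : ℝ → ℝ) (hαm : Measurable α) (hα01 : ∀ t, α t ∈ Set.Icc (0 : ℝ) 1)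
    (hαPE : ∀ t : ℝ, μ ≤ ∫ s in t..t + T, α s)
    (y : ℝ → ℝ) (hy : Integrable y) (ε : ℝ) (hε : 0 < ε) :
    ∃ β : ℝ → ℝ, Measurable β ∧ (∀ t, β t ∈ Set.Icc (0 : ℝ) 1) ∧
      (∀ t : ℝ, μ ≤ ∫ s in t..t + T, β s) ∧
      (∃ τ > 0, Function.Periodic β τ) ∧
      |∫ t, y t * (β t - α t)| < ε := by
  have hT : 0 < T := hμ.trans_le hμT
  obtain ⟨k, hk, htail⟩ : ∃ k : ℝ, 0 ≤ k ∧ ∫ t in (Icc (-k) k)ᶜ, ‖y t‖ < ε :=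
    ((eventually_ge_atTop 0).and
      (hy.tendsto_setIntegral_norm_compl_Icc.eventually (gt_mem_nhds hε))).exists
  have hp : 0 < 2 * (k + T) := by positivity
  have hβ01 := periodicPadding_mem_Icc hp hα01
  refine ⟨periodicPadding α k T hp, hαm.periodicPadding hp, hβ01,
    le_intervalIntegral_periodicPadding hp hT.le hk hμT hαm hα01 hαPE,
    ⟨_, hp, periodicPadding_periodic hp⟩, ?_⟩
  calc |∫ t, y t * (periodicPadding α k T hp t - α t)|
      ≤ ∫ t in (Icc (-k) k)ᶜ, ‖y t‖ :=
        abs_integral_mul_le_setIntegral_compl hy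
          (fun t => Real.dist_le_of_mem_Icc_01 (hβ01 t) (hα01 t))
          fun t ht => sub_eq_zero.2 (periodicPadding_of_mem_Icc hp hT ht)
    _ < ε := htail
end

section
/- If the Lie algebra generated by the projected vector fields ΠA and Π(BK) spans the full tangent space of ℝP^{d-1} at every point for some K₀, and if iterated Lie bracket expressions depend polynomially on K, then the set of K for which this holds is the complement of the zero set of a nonzero polynomial map, hence dense: concretely, if Lie(A - (Tr A/d)Id, BK₀ - (Tr(BK₀)/d)Id) = sl(d,ℝ) for some K₀, then the set of K with Lie(A - (Tr A/d)Id, BK - (Tr(BK)/d)Id) = sl(d,ℝ) is dense (indeed, Zariski-open and nonempty) in M_{m,d}(ℝ). -/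
section
attribute [local instance 100] LieRing.ofAssociativeRing
variable {d m : ℕ}

noncomputable def tracelessPart (d : ℕ) (M : Matrix (Fin d) (Fin d) ℝ) :
    Matrix (Fin d) (Fin d) ℝ :=
  M - (M.trace / (d : ℝ)) • (1 : Matrix (Fin d) (Fin d) ℝ)

/-- `K ∈ LARC₀(A,B)`: the Lie algebra generated by the traceless parts of `A` and `BK` is
all of `sl(d,ℝ)`, i.e. consists exactly of the traceless matrices. -/
noncomputable def MemLARC0 (A : Matrix (Fin d) (Fin d) ℝ) (B : Matrix (Fin d) (Fin m) ℝ)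
    (K : Matrix (Fin m) (Fin d) ℝ) : Prop :=
  ∀ M : Matrix (Fin d) (Fin d) ℝ,
    M ∈ LieSubalgebra.lieSpan ℝ (Matrix (Fin d) (Fin d) ℝ)
      {tracelessPart d A, tracelessPart d (B * K)} ↔ M.trace = 0

/-!
The Lie algebra generated by finitely many elements is the linear span of their iterated brackets.
If at `K₀` these span `sl(d)`, fix finitely many bracket words whose values at `K₀` form a basis
of `sl(d)`, and let `D K` be the determinant, in that basis, of the values of the same words at `K`.
Then `D K₀ = 1`, and the words still span `sl(d)` wherever `D ≠ 0`. Along an affine line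
`K + t • Δ` the generator `(BK)₀` is affine in `t`, so `D` is a polynomial in `t` which is nonzero
at `t = 1`; having finitely many roots, it is nonzero at points `t` arbitrarily close to `0`.
-/

universe u

open Matrix Polynomial Set Submodule LieAlgebra.SpecialLinear

namespace FreeMagma

variable {α R L L' : Type*} [CommRing R] [LieRing L] [LieAlgebra R L] [LieRing L']
  [LieAlgebra R L']

def lieEval (x : α → L) : FreeMagma α → L
  | of a => x a
  | mul u v => ⁅lieEval x u, lieEval x v⁆

theorem map_lieEval (f : L →ₗ⁅R⁆ L') (x : α → L) (w : FreeMagma α) :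
    f (lieEval x w) = lieEval (f ∘ x) w := by
  induction w with
  | ih1 a => rfl
  | ih2 u v hu hv => exact (LieHom.map_lie f _ _).trans (congrArg₂ _ hu hv)

theorem lieEval_mem_lieSpan (x : α → L) (w : FreeMagma α) :
    lieEval x w ∈ LieSubalgebra.lieSpan R L (range x) := by
  induction w with
  | ih1 a => exact LieSubalgebra.subset_lieSpan (mem_range_self a)
  | ih2 u v hu hv => exact LieSubalgebra.lie_mem _ hu hv

end FreeMagma

open FreeMagma (lieEval lieEval_mem_lieSpan map_lieEval)

theorem LieSubalgebra.coe_lieSpan_range_eq_span_lieEval {α R L : Type*} [CommRing R] [LieRing L]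
    [LieAlgebra R L] (x : α → L) :
    (lieSpan R L (range x) : Submodule R L) = span R (range (lieEval x)) := by
  refine le_antisymm ?_ (span_le.2 (range_subset_iff.2 (lieEval_mem_lieSpan x)))
  have hlie : ∀ {a b}, a ∈ span R (range (lieEval x)) → b ∈ span R (range (lieEval x)) →
      ⁅a, b⁆ ∈ span R (range (lieEval x)) := by
    intro a b ha hb
    induction ha, hb using span_induction₂ with
    | mem_mem a b ha hb =>
      obtain ⟨u, rfl⟩ := ha
      obtain ⟨v, rfl⟩ := hb
      exact subset_span ⟨u * v, rfl⟩
    | zero_left => simp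
    | zero_right => simp
    | add_left _ _ _ _ _ _ h₁ h₂ => rw [add_lie]; exact add_mem h₁ h₂
    | add_right _ _ _ _ _ _ h₁ h₂ => rw [lie_add]; exact add_mem h₁ h₂
    | smul_left r _ _ _ _ h => rw [smul_lie]; exact smul_mem _ r h
    | smul_right r _ _ _ _ h => rw [lie_smul]; exact smul_mem _ r h
  change _ ≤ ({ span R (range (lieEval x)) with lie_mem' := hlie } : LieSubalgebra R L)
  exact lieSpan_le.2 (range_subset_iff.2 fun a => subset_span ⟨FreeMagma.of a, rfl⟩)

theorem span_range_lieEval_le_sl {α R n : Type*} [CommRing R] [Fintype n] [DecidableEq n]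
    {x : α → Matrix n n R} (hx : ∀ a, (x a).trace = 0) :
    span R (range (lieEval x)) ≤ (sl n R).toSubmodule := by
  rw [← LieSubalgebra.coe_lieSpan_range_eq_span_lieEval, LieSubalgebra.toSubmodule_le_toSubmodule]
  exact LieSubalgebra.lieSpan_le.2 (range_subset_iff.2 hx)

theorem trace_tracelessPart (M : Matrix (Fin d) (Fin d) ℝ) : (tracelessPart d M).trace = 0 := by
  rcases eq_or_ne d 0 with rfl | hd
  · exact trace_fin_zero _
  · simp [tracelessPart, hd]

theorem tracelessPart_add_smul (M N : Matrix (Fin d) (Fin d) ℝ) (t : ℝ) :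
    tracelessPart d (M + t • N) = tracelessPart d M + t • tracelessPart d N := by
  simp only [tracelessPart, trace_add, trace_smul, smul_eq_mul]
  module

noncomputable def tracelessGenerators (A : Matrix (Fin d) (Fin d) ℝ)
    (B : Matrix (Fin d) (Fin m) ℝ) (K : Matrix (Fin m) (Fin d) ℝ) :
    Fin 2 → Matrix (Fin d) (Fin d) ℝ :=
  ![tracelessPart d A, tracelessPart d (B * K)]

theorem trace_tracelessGenerators (A : Matrix (Fin d) (Fin d) ℝ)
    (B : Matrix (Fin d) (Fin m) ℝ) (K : Matrix (Fin m) (Fin d) ℝ) (a : Fin 2) :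
    (tracelessGenerators A B K a).trace = 0 := by
  fin_cases a <;> exact trace_tracelessPart _

theorem tracelessGenerators_add_smul (A : Matrix (Fin d) (Fin d) ℝ)
    (B : Matrix (Fin d) (Fin m) ℝ) (K Δ : Matrix (Fin m) (Fin d) ℝ) (t : ℝ) :
    tracelessGenerators A B (K + t • Δ) =
      tracelessGenerators A B K + t • ![0, tracelessPart d (B * Δ)] := by
  funext a
  fin_cases a <;> simp [tracelessGenerators, Matrix.mul_add, tracelessPart_add_smul]

theorem memLARC0_iff_span_eq (A : Matrix (Fin d) (Fin d) ℝ) (B : Matrix (Fin d) (Fin m) ℝ)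
    (K : Matrix (Fin m) (Fin d) ℝ) :
    MemLARC0 A B K ↔ span ℝ (range (lieEval (tracelessGenerators A B K))) =
      (sl (Fin d) ℝ).toSubmodule := by
  rw [← LieSubalgebra.coe_lieSpan_range_eq_span_lieEval, tracelessGenerators,
    range_cons_cons_empty, LieSubalgebra.toSubmodule_inj, SetLike.ext_iff]
  rfl

theorem Submodule.exists_basis_of_span_range_eq {K V : Type*} {ι : Type u} [DivisionRing K]
    [AddCommGroup V] [Module K V] [FiniteDimensional K V] {S : Submodule K V} {v : ι → V}
    (h : span K (range v) = S) :
    ∃ (κ : Type u) (_ : Fintype κ) (a : κ → ι) (b : Module.Basis κ K S),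
      ∀ k, (b k : V) = v (a k) := by
  obtain ⟨κ, a, -, hspan, hli⟩ := exists_linearIndependent' K v
  have : Finite κ := hli.finite
  exact ⟨κ, Fintype.ofFinite κ, a,
    (Module.Basis.span hli).map (LinearEquiv.ofEq _ _ (hspan.trans h)), fun k => by simp⟩

theorem Submodule.span_range_eq_of_det_ne_zero {K V ι : Type*} [Field K] [AddCommGroup V]
    [Module K V] [Fintype ι] [DecidableEq ι] {S : Submodule K V} (b : Module.Basis ι K S)
    {π : V →ₗ[K] S} (hπ : π ∘ₗ S.subtype = LinearMap.id) {u : ι → V} (hu : ∀ i, u i ∈ S)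
    (h : b.det (π ∘ u) ≠ 0) : span K (range u) = S := by
  have htop := ((b.is_basis_iff_det).2 (isUnit_iff_ne_zero.2 h)).2
  have hu' : S.subtype ∘ π ∘ u = u := funext fun i => by
    simpa using congrArg Subtype.val (LinearMap.congr_fun hπ ⟨u i, hu i⟩)
  rw [← hu', range_comp, ← map_span, htop, map_top, range_subtype]

theorem exists_polynomial_eval_eq_linearMap {R n : Type*} [CommRing R] [Fintype n]
    [DecidableEq n] (ℓ : Matrix n n R →ₗ[R] R) (P : Matrix n n R[X]) :
    ∃ q : R[X], ∀ t, q.eval t = ℓ (P.map (eval t)) := by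
  refine ⟨∑ a, ∑ b, P a b * C (ℓ (single a b 1)), fun t => ?_⟩
  conv_rhs => rw [matrix_eq_sum_single (P.map (eval t))]
  simp only [eval_finsetSum, eval_mul, eval_C, map_sum]
  refine Finset.sum_congr rfl fun a _ => Finset.sum_congr rfl fun b _ => ?_
  rw [map_apply, ← smul_eq_mul, ← map_smul, smul_single, smul_eq_mul, mul_one]

theorem exists_polynomial_eval_eq_det_lieEval {α R n ι : Type*} [CommRing R] [Fintype n]
    [DecidableEq n] [Fintype ι] [DecidableEq ι] (ℓ : ι → Matrix n n R →ₗ[R] R)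
    (w : ι → FreeMagma α) (x y : α → Matrix n n R) :
    ∃ q : R[X], ∀ t, q.eval t = (Matrix.of fun i j => ℓ i (lieEval (x + t • y) (w j))).det := by
  let line : α → Matrix n n R[X] := fun a => (x a).map C + (X : R[X]) • (y a).map C
  have hline t : (aeval t).mapMatrix.toLieHom ∘ line = x + t • y := by
    funext a; ext i j; simp [line, mul_comm t]
  choose q hq using fun i j => exists_polynomial_eval_eq_linearMap (ℓ i) (lieEval line (w j))
  refine ⟨(Matrix.of q).det, fun t => ?_⟩
  rw [← coe_evalRingHom, RingHom.map_det]
  congr 1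
  ext i j
  rw [RingHom.mapMatrix_apply, map_apply, of_apply, of_apply, coe_evalRingHom, hq, ← hline t,
    ← map_lieEval]
  rfl

theorem dense_setOf_ne_zero_of_polynomial_on_lines {E : Type*} [AddCommGroup E] [Module ℝ E]
    [TopologicalSpace E] [ContinuousAdd E] [ContinuousSMul ℝ E] {f : E → ℝ}
    (hf : ∀ x v : E, ∃ q : ℝ[X], ∀ t : ℝ, q.eval t = f (x + t • v)) {x₀ : E} (hx₀ : f x₀ ≠ 0) :
    Dense {x | f x ≠ 0} := by
  intro x
  obtain ⟨q, hq⟩ := hf x (x₀ - x)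
  have hq₀ : q ≠ 0 := by
    rintro rfl
    exact hx₀ (by simpa using (hq 1).symm)
  have hdense : Dense {t : ℝ | q.eval t ≠ 0} :=
    (finite_setOfPred_isRoot hq₀).countable.dense_compl ℝ
  have hline : Continuous fun t : ℝ => x + t • (x₀ - x) := by fun_prop
  have hx := mem_closure_image hline.continuousAt (hdense 0)
  rw [zero_smul, add_zero] at hx
  refine closure_mono ?_ hx
  rintro _ ⟨t, ht, rfl⟩
  simpa [← hq] using ht

/-- If `Lie(A - (Tr A/d)Id, BK₀ - (Tr(BK₀)/d)Id) = sl(d,ℝ)` for some `K₀`, then the set of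
`K` with this property is dense in `M_{m,d}(ℝ)`. -/
theorem LARC0_dense (A : Matrix (Fin d) (Fin d) ℝ) (B : Matrix (Fin d) (Fin m) ℝ)
    (K₀ : Matrix (Fin m) (Fin d) ℝ) (hK₀ : MemLARC0 A B K₀) :
    Dense {K : Matrix (Fin m) (Fin d) ℝ | MemLARC0 A B K} := by
  classical
  have hsl K := span_range_lieEval_le_sl (trace_tracelessGenerators A B K)
  obtain ⟨ι, _, w, b, hb⟩ :=
    exists_basis_of_span_range_eq ((memLARC0_iff_span_eq A B K₀).1 hK₀)
  obtain ⟨π, hπ⟩ := (sl (Fin d) ℝ).toSubmodule.subtype.exists_leftInverse_of_injective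
    (ker_subtype _)
  let D K := b.det (π ∘ lieEval (tracelessGenerators A B K) ∘ w)
  have hD₀ : D K₀ ≠ 0 := by
    have : π ∘ lieEval (tracelessGenerators A B K₀) ∘ w = b := funext fun k =>
      (congrArg π (hb k)).symm.trans (LinearMap.congr_fun hπ (b k))
    simp only [D, this, b.det_self, ne_eq, one_ne_zero, not_false_eq_true]
  have hD : ∀ K, D K ≠ 0 → MemLARC0 A B K := fun K hK =>
    (memLARC0_iff_span_eq A B K).2 <| (hsl K).antisymm <|
      (span_range_eq_of_det_ne_zero b hπ (fun k => hsl K (subset_span ⟨w k, rfl⟩)) hK).ge.trans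
        (span_mono (range_comp_subset_range _ _))
  refine (dense_setOf_ne_zero_of_polynomial_on_lines (fun K Δ => ?_) hD₀).mono hD
  obtain ⟨q, hq⟩ := exists_polynomial_eval_eq_det_lieEval (fun i => b.coord i ∘ₗ π) w
    (tracelessGenerators A B K) ![0, tracelessPart d (B * Δ)]
  refine ⟨q, fun t => ?_⟩
  rw [hq, ← tracelessGenerators_add_smul, show D (K + t • Δ) = _ from b.det_apply _]
  rfl

end
end

section
/- Single-input Lie bracket generation for the Jordan block: for the pair (J_d, e_d), every row vector K = (k₁,...,k_d) with all entries k_i ≠ 0 satisfies Lie(J_d, e_d·K) = M_d(ℝ), i.e., the Lie algebra generated by the nilpotent Jordan block J_d and the rank-one matrix e_d·K is all of gl(d,ℝ). -/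
/-!
Write `e_i` for the standard basis columns. Bracketing a rank-one matrix `X = f k` with `A` and
then with `X` again isolates `(A f) k` as soon as `k f ≠ 0`; starting from `e_d K` and
`A = J_d`, this walks down to every `e_i K`. Bracketing with `J_d` moves `e_1 (K J_d^l)` to
`e_1 (K J_d^(l+1))`, and bracketing with `e_i K` then carries it to row `i`. Since `K_1 ≠ 0`,
the rows `K J_d^l` form a triangular basis, so every `e_i w` lies in the Lie algebra.
-/

attribute [local instance 100] LieRing.ofAssociativeRing

namespace Matrix

section CommRing

variable {R n : Type*} [CommRing R] [Fintype n] [DecidableEq n]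

theorem lie_vecMulVec (A : Matrix n n R) (f k : n → R) :
    ⁅A, vecMulVec f k⁆ = vecMulVec (A *ᵥ f) k - vecMulVec f (k ᵥ* A) := by
  rw [Ring.lie_def, mul_vecMulVec, vecMulVec_mul]

theorem lie_vecMulVec_vecMulVec (f k g w : n → R) :
    ⁅vecMulVec f k, vecMulVec g w⁆ =
      (k ⬝ᵥ g) • vecMulVec f w - (w ⬝ᵥ f) • vecMulVec g k := by
  rw [Ring.lie_def, vecMulVec_mul_vecMulVec, vecMulVec_mul_vecMulVec, vecMulVec_smul,
    vecMulVec_smul]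

variable {L : LieSubalgebra R (Matrix n n R)}

theorem vecMulVec_vecMul_mem_of_mulVec_eq_zero {A : Matrix n n R} {f w : n → R} (hA : A ∈ L)
    (hAf : A *ᵥ f = 0) (hfw : vecMulVec f w ∈ L) : vecMulVec f (w ᵥ* A) ∈ L := by
  simpa [lie_vecMulVec, hAf] using L.neg_mem (L.lie_mem hA hfw)

theorem eq_top_of_vecMulVec_single_mem {S : Set (n → R)}
    (hS : Submodule.span R S = ⊤) (h : ∀ i, ∀ w ∈ S, vecMulVec (Pi.single i 1) w ∈ L) :
    L = ⊤ := by
  have hrow (i : n) (w : n → R) : vecMulVec (Pi.single i 1) w ∈ L := by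
    have hle : Submodule.span R S ≤
        L.toSubmodule.comap (vecMulVecBilin R R (Pi.single i (1 : R))) :=
      Submodule.span_le.2 (h i)
    exact hle (hS ▸ Submodule.mem_top)
  rw [eq_top_iff]
  intro A _
  have hA : A = ∑ i, vecMulVec (Pi.single i 1) (A i) := by
    ext a b
    simp [vecMulVec_apply, Pi.single_apply, Matrix.sum_apply]
  rw [hA]
  exact L.toSubmodule.sum_mem fun i _ => hrow i (A i)

end CommRing

section Field

variable {K n : Type*} [Field K] [Fintype n] [DecidableEq n]
  {L : LieSubalgebra K (Matrix n n K)}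

/-- With `X = f k` and `Y = ⁅A, X⁆ = (A f) k - f (k A)`, one computes
`⁅X, Y⁆ = 2 (k A f) X - (k f) ((A f) k + f (k A))`, so `(A f) k` is a combination of
`X`, `Y` and `⁅X, Y⁆`. -/
theorem vecMulVec_mulVec_mem [NeZero (2 : K)] {A : Matrix n n K} {f k : n → K} (hA : A ∈ L)
    (hfk : vecMulVec f k ∈ L) (hkf : k ⬝ᵥ f ≠ 0) : vecMulVec (A *ᵥ f) k ∈ L := by
  set X := vecMulVec f k with hX
  have key : vecMulVec (A *ᵥ f) k = (2 : K)⁻¹ • (⁅A, X⁆ +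
      (k ⬝ᵥ f)⁻¹ • ((2 * (k ⬝ᵥ A *ᵥ f)) • X - ⁅X, ⁅A, X⁆⁆)) := by
    rw [lie_vecMulVec, lie_sub, hX, lie_vecMulVec_vecMulVec, lie_vecMulVec_vecMulVec,
      ← dotProduct_mulVec]
    match_scalars <;> field_simp <;> ring
  rw [key]
  have hY := L.lie_mem hA hfk
  exact L.smul_mem _ (L.add_mem hY (L.smul_mem _ (L.sub_mem (L.smul_mem _ hfk)
    (L.lie_mem hfk hY))))

theorem vecMulVec_mem_of_dotProduct_ne_zero {f g k w : n → K} (hfk : vecMulVec f k ∈ L)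
    (hgw : vecMulVec g w ∈ L) (hgk : vecMulVec g k ∈ L) (hkg : k ⬝ᵥ g ≠ 0) :
    vecMulVec f w ∈ L := by
  have key : vecMulVec f w =
      (k ⬝ᵥ g)⁻¹ • (⁅vecMulVec f k, vecMulVec g w⁆ + (w ⬝ᵥ f) • vecMulVec g k) := by
    rw [lie_vecMulVec_vecMulVec, sub_add_cancel, smul_smul, inv_mul_cancel₀ hkg, one_smul]
  rw [key]
  exact L.smul_mem _ (L.add_mem (L.lie_mem hfk hgw) (L.smul_mem _ hgk))

end Field

section JordanShift

def jordanShift (R : Type*) [Zero R] [One R] (n : ℕ) : Matrix (Fin n) (Fin n) R :=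
  of fun i j => if (j : ℕ) = i + 1 then 1 else 0

variable {R : Type*} [Semiring R] {n : ℕ}

theorem jordanShift_pow_apply (l : ℕ) (i j : Fin n) :
    (jordanShift R n ^ l) i j = if (j : ℕ) = i + l then 1 else 0 := by
  induction l generalizing j with
  | zero => simp [one_apply, Fin.ext_iff, eq_comm]
  | succ l ih =>
    rw [pow_succ, mul_apply]
    simp only [ih]
    simp only [jordanShift, of_apply, ite_mul, one_mul, zero_mul]
    by_cases h : (i : ℕ) + l < n
    · rw [Finset.sum_eq_single ⟨i + l, h⟩ (fun c _ hc => if_neg fun h' => hc (Fin.ext h'))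
        (by simp)]
      simp [add_assoc]
    · rw [Finset.sum_eq_zero fun c _ => if_neg (by have := c.isLt; omega),
        if_neg (by have := j.isLt; omega)]

theorem jordanShift_mulVec_single_succ (i : Fin n) :
    jordanShift R (n + 1) *ᵥ Pi.single i.succ 1 = Pi.single i.castSucc 1 := by
  ext a
  simp [jordanShift, Pi.single_apply, Fin.ext_iff, eq_comm]

theorem jordanShift_mulVec_single_zero :
    jordanShift R (n + 1) *ᵥ Pi.single 0 1 = 0 := by
  ext a
  simp [jordanShift]

theorem vecMul_jordanShift_pow_apply_of_lt (k : Fin n → R) {l : ℕ} {j : Fin n}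
    (hj : (j : ℕ) < l) :
    (k ᵥ* jordanShift R n ^ l) j = 0 := by
  rw [vecMul, dotProduct]
  exact Finset.sum_eq_zero fun i _ => by rw [jordanShift_pow_apply, if_neg (by omega), mul_zero]

theorem vecMul_jordanShift_pow_apply_self (k : Fin (n + 1) → R) (l : Fin (n + 1)) :
    (k ᵥ* jordanShift R (n + 1) ^ (l : ℕ)) l = k 0 := by
  rw [vecMul, dotProduct, Finset.sum_eq_single 0 (fun i _ hi => ?_)
    (fun h => (h (Finset.mem_univ _)).elim)]
  · rw [jordanShift_pow_apply, if_pos (by rw [Fin.val_zero, zero_add]), mul_one]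
  · rw [jordanShift_pow_apply, if_neg fun h => hi (Fin.ext (by rw [Fin.val_zero]; omega)),
    mul_zero]

theorem span_range_vecMul_jordanShift_pow {K : Type*} [Field K] (k : Fin (n + 1) → K)
    (hk : k 0 ≠ 0) :
    Submodule.span K (Set.range fun l : Fin (n + 1) => k ᵥ* jordanShift K (n + 1) ^ (l : ℕ)) =
      ⊤ := by
  set W : Matrix (Fin (n + 1)) (Fin (n + 1)) K :=
    of fun l => k ᵥ* jordanShift K (n + 1) ^ (l : ℕ)
  have hW : IsUnit W := by
    have htri : W.IsUpperTriangular := fun i j hji => vecMul_jordanShift_pow_apply_of_lt k hji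
    rw [isUnit_iff_isUnit_det, det_of_isUpperTriangular htri]
    simp [W, vecMul_jordanShift_pow_apply_self, hk]
  exact (linearIndependent_rows_of_isUnit hW).span_eq_top_of_card_eq_finrank' (by simp)

end JordanShift

end Matrix

open Matrix

/-- Single-input Lie bracket generation for the Jordan block: if all the entries of the row
vector `K` are nonzero, then the Lie algebra generated by the nilpotent Jordan block `J_d`
and the rank-one matrix `e_d K` is all of `gl(d,ℝ)`. -/
theorem lie_span_jordan_rankOne {d : ℕ} (K : Fin d → ℝ) (hK : ∀ j, K j ≠ 0)
    (Jd E : Matrix (Fin d) (Fin d) ℝ)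
    (hJ : Jd = Matrix.of fun i j : Fin d => if (j : ℕ) = (i : ℕ) + 1 then (1 : ℝ) else 0)
    (hE : E = Matrix.of fun i j : Fin d => if (i : ℕ) = d - 1 then K j else 0) :
    LieSubalgebra.lieSpan ℝ (Matrix (Fin d) (Fin d) ℝ) {Jd, E} = ⊤ := by
  set L := LieSubalgebra.lieSpan ℝ (Matrix (Fin d) (Fin d) ℝ) {Jd, E}
  obtain _ | n := d
  · exact eq_top_of_vecMulVec_single_mem Submodule.span_univ fun i => i.elim0
  obtain rfl : Jd = jordanShift ℝ (n + 1) := hJ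
  have hJL : jordanShift ℝ (n + 1) ∈ L := LieSubalgebra.subset_lieSpan (by simp)
  have hEL : vecMulVec (Pi.single (Fin.last n) 1) K ∈ L := by
    have hE' : E = vecMulVec (Pi.single (Fin.last n) 1) K := by
      ext i j
      simp [hE, vecMulVec_apply, Pi.single_apply, Fin.ext_iff]
    exact hE' ▸ LieSubalgebra.subset_lieSpan (by simp)
  have hrows (i : Fin (n + 1)) : vecMulVec (Pi.single i 1) K ∈ L := by
    induction i using Fin.reverseInduction with
    | last => exact hEL
    | cast i hi =>
      rw [← jordanShift_mulVec_single_succ]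
      exact vecMulVec_mulVec_mem hJL hi (by rw [dotProduct_single_one]; exact hK _)
  have hrow_zero (l : ℕ) :
      vecMulVec (Pi.single 0 1) (K ᵥ* jordanShift ℝ (n + 1) ^ l) ∈ L := by
    induction l with
    | zero => simpa using hrows 0
    | succ l ih =>
      simpa [pow_succ] using
        vecMulVec_vecMul_mem_of_mulVec_eq_zero hJL jordanShift_mulVec_single_zero ih
  refine eq_top_of_vecMulVec_single_mem (span_range_vecMul_jordanShift_pow K (hK 0)) ?_
  rintro i _ ⟨l, rfl⟩
  exact vecMulVec_mem_of_dotProduct_ne_zero (hrows i) (hrow_zero l) (hrows 0)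
    (by simpa using hK 0)
end
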